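/- Let (M,g) be a smooth Riemannian manifold of dimension n ≥ 3, N = 2n/(n-2), τ a smooth function, σ a smooth symmetric 2-tensor field, and let ρ and J be arbitrary maps assigning to each pair (ĝ, K̂) of a Riemannian metric and a symmetric 2-tensor field on M a function and a one-form respectively. Define the system S'_{g,τ,σ}(φ,W) = 0 as ρ(ĝ, K̂) = 0 and J(ĝ, K̂) = 0 where ĝ = φ^{N-2} g and K̂ = (τ/n) ĝ + φ^{-2}(σ + φ^N L̊_g W). Then for every smooth positive function ψ, setting g̃ = ψ^{N-2} g and σ̃ = ψ^{-2} σ, a pair (φ, W) with φ > 0 solves S'_{g,τ,σ} if and only if the pair (ψ^{-1} φ, ψ^{N-2} W) solves S'_{g̃,τ,σ̃}. In other words, the method-B system is conformally covariant, regardless of the explicit form of the constraint maps ρ and J. -/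

import Mathlib

noncomputable section

open scoped BigOperators

/-- The `i`-th partial derivative of a function on `ℝⁿ` (Euclidean coordinates). -/
def pd {n : ℕ} (f : EuclideanSpace ℝ (Fin n) → ℝ) (i : Fin n)
    (x : EuclideanSpace ℝ (Fin n)) : ℝ :=
  fderiv ℝ f x (EuclideanSpace.single i 1)

/-- The Christoffel symbols `Γ^k_{ij}` of the Levi-Civita connection of the metric `g`,
`Γ^k_{ij} = ½ g^{kl} (∂_i g_{jl} + ∂_j g_{il} - ∂_l g_{ij})` (indices raised with the
inverse matrix of `g`). -/
def christoffel {n : ℕ} (g : EuclideanSpace ℝ (Fin n) → Matrix (Fin n) (Fin n) ℝ)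
    (k i j : Fin n) (x : EuclideanSpace ℝ (Fin n)) : ℝ :=
  (1 / 2) * ∑ l, (g x)⁻¹ k l *
    (pd (fun y => g y j l) i x + pd (fun y => g y i l) j x - pd (fun y => g y i j) l x)

/-- The covariant derivative `∇_i W_j = ∂_i W_j - Γ^k_{ij} W_k` of a one-form `W`. -/
def covDOne {n : ℕ} (g : EuclideanSpace ℝ (Fin n) → Matrix (Fin n) (Fin n) ℝ)
    (W : EuclideanSpace ℝ (Fin n) → Fin n → ℝ) (i j : Fin n)
    (x : EuclideanSpace ℝ (Fin n)) : ℝ :=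
  pd (fun y => W y j) i x - ∑ k, christoffel g k i j x * W x k

/-- The conformal Killing operator on one-forms,
`(L̊_g W)_{ij} = ∇_i W_j + ∇_j W_i - (2/n) (∇^k W_k) g_{ij}`, with `∇^k W_k = g^{kl} ∇_k W_l`. -/
def confKilling {n : ℕ} (g : EuclideanSpace ℝ (Fin n) → Matrix (Fin n) (Fin n) ℝ)
    (W : EuclideanSpace ℝ (Fin n) → Fin n → ℝ) (i j : Fin n)
    (x : EuclideanSpace ℝ (Fin n)) : ℝ :=
  covDOne g W i j x + covDOne g W j i x -
    (2 / (n : ℝ)) * (∑ k, ∑ l, (g x)⁻¹ k l * covDOne g W k l x) * g x i j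

/-- The covariant derivative `∇_l h_{ij} = ∂_l h_{ij} - Γ^m_{li} h_{mj} - Γ^m_{lj} h_{im}`
of a covariant 2-tensor field `h`. -/
def covDTwo {n : ℕ} (g : EuclideanSpace ℝ (Fin n) → Matrix (Fin n) (Fin n) ℝ)
    (h : EuclideanSpace ℝ (Fin n) → Matrix (Fin n) (Fin n) ℝ) (l i j : Fin n)
    (x : EuclideanSpace ℝ (Fin n)) : ℝ :=
  pd (fun y => h y i j) l x - ∑ m, christoffel g m l i x * h x m j
    - ∑ m, christoffel g m l j x * h x i m

/-- The divergence of a covariant 2-tensor field, `(div_g h)_i = -∇^k h_{ki} = -g^{kl} ∇_l h_{ki}`. -/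
def divT {n : ℕ} (g : EuclideanSpace ℝ (Fin n) → Matrix (Fin n) (Fin n) ℝ)
    (h : EuclideanSpace ℝ (Fin n) → Matrix (Fin n) (Fin n) ℝ) (i : Fin n)
    (x : EuclideanSpace ℝ (Fin n)) : ℝ :=
  - ∑ k, ∑ l, (g x)⁻¹ k l * covDTwo g h l k i x

/-- `g` is a (smooth) Riemannian metric in coordinates: a smooth field of positive-definite
(symmetric) matrices. -/
def IsRiemannianMetric {n : ℕ}
    (g : EuclideanSpace ℝ (Fin n) → Matrix (Fin n) (Fin n) ℝ) : Prop :=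
  (∀ x, (g x).PosDef) ∧ ∀ i j, ContDiff ℝ (⊤ : ℕ∞) fun x => g x i j

/-- A covariant 2-tensor field is trace-free with respect to `g` : `g^{ij} h_{ij} = 0`. -/
def TraceFree {n : ℕ} (g h : EuclideanSpace ℝ (Fin n) → Matrix (Fin n) (Fin n) ℝ) : Prop :=
  ∀ x, ∑ i, ∑ j, (g x)⁻¹ i j * h x i j = 0

/-- A smooth symmetric covariant 2-tensor field. -/
def IsSmoothSym2Tensor {n : ℕ}
    (h : EuclideanSpace ℝ (Fin n) → Matrix (Fin n) (Fin n) ℝ) : Prop :=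
  (∀ x, (h x).IsSymm) ∧ ∀ i j, ContDiff ℝ (⊤ : ℕ∞) fun x => h x i j

/-- A smooth one-form. -/
def IsSmoothOneForm {n : ℕ} (W : EuclideanSpace ℝ (Fin n) → Fin n → ℝ) : Prop :=
  ∀ j, ContDiff ℝ (⊤ : ℕ∞) fun x => W x j

/-- A TT-tensor with respect to `g`: a symmetric covariant 2-tensor field which is
trace-free and divergence-free with respect to `g`. -/
def IsTT {n : ℕ} (g σ : EuclideanSpace ℝ (Fin n) → Matrix (Fin n) (Fin n) ℝ) : Prop :=
  (∀ x, (σ x).IsSymm) ∧ TraceFree g σ ∧ ∀ i x, divT g σ i x = 0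

/-- The conformally parametrized metric `ĝ = φ^{N-2} g`. -/
def hatg {n : ℕ} (N : ℝ) (g : EuclideanSpace ℝ (Fin n) → Matrix (Fin n) (Fin n) ℝ)
    (φ : EuclideanSpace ℝ (Fin n) → ℝ) :
    EuclideanSpace ℝ (Fin n) → Matrix (Fin n) (Fin n) ℝ :=
  fun x => φ x ^ (N - 2) • g x

/-- The method-B parametrized second fundamental form
`K̂ = (τ/n) ĝ + φ^{-2} (σ + φ^N L̊_g W)`. -/
def hatK {n : ℕ} (N : ℝ) (g σ : EuclideanSpace ℝ (Fin n) → Matrix (Fin n) (Fin n) ℝ)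
    (τ φ : EuclideanSpace ℝ (Fin n) → ℝ) (W : EuclideanSpace ℝ (Fin n) → Fin n → ℝ) :
    EuclideanSpace ℝ (Fin n) → Matrix (Fin n) (Fin n) ℝ :=
  fun x => Matrix.of fun i j =>
    τ x / (n : ℝ) * (φ x ^ (N - 2) * g x i j) +
      φ x ^ (-2 : ℝ) * (σ x i j + φ x ^ N * confKilling g W i j x)

lemma pd_mul {n : ℕ} {a b : EuclideanSpace ℝ (Fin n) → ℝ} (i : Fin n)
    (x : EuclideanSpace ℝ (Fin n)) (ha : DifferentiableAt ℝ a x)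
    (hb : DifferentiableAt ℝ b x) :
    pd (fun y => a y * b y) i x = pd a i x * b x + a x * pd b i x := by
  unfold pd
  rw [fderiv_fun_mul ha hb]
  simp [mul_comm]
  ring

section smulmetric

variable {n : ℕ} {g : EuclideanSpace ℝ (Fin n) → Matrix (Fin n) (Fin n) ℝ}
  {u : EuclideanSpace ℝ (Fin n) → ℝ}

variable {W' : EuclideanSpace ℝ (Fin n) → Fin n → ℝ}
variable (hg : IsRiemannianMetric g) (hu : ∀ x, 0 < u x) (huc : ContDiff ℝ (⊤ : ℕ∞) u)

set_option linter.unusedSectionVars false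
include hg hu huc

lemma inv_smul_metric (x : EuclideanSpace ℝ (Fin n)) :
    (u x • g x)⁻¹ = (u x)⁻¹ • (g x)⁻¹ := by
  apply Matrix.inv_eq_left_inv
  rw [Matrix.smul_mul, Matrix.mul_smul, smul_smul, inv_mul_cancel₀ (hu x).ne', one_smul,
    Matrix.nonsing_inv_mul (g x) (Matrix.isUnit_iff_isUnit_det (g x) |>.mp (hg.1 x).isUnit)]

lemma g_symm (x : EuclideanSpace ℝ (Fin n)) (j l : Fin n) : g x j l = g x l j := by
  have h := (hg.1 x).isHermitian
  rw [Matrix.IsHermitian] at h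
  conv_lhs => rw [← h]
  simp [Matrix.conjTranspose_apply]

lemma ginv_mul_g (x : EuclideanSpace ℝ (Fin n)) (k j : Fin n) :
    ∑ l, (g x)⁻¹ k l * g x l j = if k = j then 1 else 0 := by
  have h : ((g x)⁻¹ * g x) k j = (1 : Matrix (Fin n) (Fin n) ℝ) k j := by
    rw [Matrix.nonsing_inv_mul (g x) (Matrix.isUnit_iff_isUnit_det (g x) |>.mp (hg.1 x).isUnit)]
  rw [Matrix.mul_apply] at h
  rw [h, Matrix.one_apply]

lemma ginv_symm (x : EuclideanSpace ℝ (Fin n)) (k l : Fin n) :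
    (g x)⁻¹ k l = (g x)⁻¹ l k := by
  have h := (hg.1 x).isHermitian.inv
  conv_lhs => rw [← h]
  simp [Matrix.conjTranspose_apply]

lemma pd_smul_g (a b : Fin n) (i : Fin n) (x : EuclideanSpace ℝ (Fin n)) :
    pd (fun y => (u y • g y) a b) i x
      = pd u i x * g x a b + u x * pd (fun y => g y a b) i x := by
  have : (fun y => (u y • g y) a b) = fun y => u y * g y a b := by
    funext y; simp [Matrix.smul_apply]
  rw [this, pd_mul i x ((huc.differentiable (by simp)).differentiableAt)
    (((hg.2 a b).differentiable (by simp)).differentiableAt)]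

lemma christoffel_smul (k i j : Fin n) (x : EuclideanSpace ℝ (Fin n)) :
    christoffel (fun y => u y • g y) k i j x
      = christoffel g k i j x
        + (pd u i x * (if k = j then 1 else 0) + pd u j x * (if k = i then 1 else 0)
            - g x i j * ∑ l, (g x)⁻¹ k l * pd u l x) / (2 * u x) := by
  have hux := (hu x).ne'
  unfold christoffel
  have hinv : ((fun y => u y • g y) x)⁻¹ = (u x)⁻¹ • (g x)⁻¹ := inv_smul_metric hg hu huc x
  rw [hinv]
  have key : ∀ l, ((u x)⁻¹ • (g x)⁻¹) k l *
      (pd (fun y => (u y • g y) j l) i x + pd (fun y => (u y • g y) i l) j x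
        - pd (fun y => (u y • g y) i j) l x)
    = (g x)⁻¹ k l * (pd (fun y => g y j l) i x + pd (fun y => g y i l) j x
        - pd (fun y => g y i j) l x)
      + (u x)⁻¹ * (pd u i x * ((g x)⁻¹ k l * g x l j)
          + pd u j x * ((g x)⁻¹ k l * g x l i)
          - g x i j * ((g x)⁻¹ k l * pd u l x)) := by
    intro l
    rw [pd_smul_g hg hu huc, pd_smul_g hg hu huc, pd_smul_g hg hu huc]
    rw [g_symm hg hu huc x j l, g_symm hg hu huc x i l]
    simp only [Matrix.smul_apply, smul_eq_mul]
    field_simp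
    ring
  rw [Finset.sum_congr rfl (fun l _ => key l)]
  rw [Finset.sum_add_distrib, ← Finset.mul_sum]
  have h1 : ∑ l, (pd u i x * ((g x)⁻¹ k l * g x l j)
      + pd u j x * ((g x)⁻¹ k l * g x l i)
      - g x i j * ((g x)⁻¹ k l * pd u l x))
    = pd u i x * (if k = j then 1 else 0) + pd u j x * (if k = i then 1 else 0)
      - g x i j * ∑ l, (g x)⁻¹ k l * pd u l x := by
    rw [Finset.sum_sub_distrib, Finset.sum_add_distrib, ← Finset.mul_sum, ← Finset.mul_sum,
      ← Finset.mul_sum, ginv_mul_g hg hu huc, ginv_mul_g hg hu huc]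
  rw [h1]
  field_simp

lemma covDOne_smul (hW : IsSmoothOneForm W') (i j : Fin n) (x : EuclideanSpace ℝ (Fin n)) :
    covDOne (fun y => u y • g y) (fun y k => u y * W' y k) i j x
      = u x * covDOne g W' i j x
        + (1 / 2) * (pd u i x * W' x j - pd u j x * W' x i)
        + (1 / 2) * g x i j * ∑ k, (∑ l, (g x)⁻¹ k l * pd u l x) * W' x k := by
  unfold covDOne
  rw [pd_mul i x ((huc.differentiable (by simp)).differentiableAt)
    (((hW j).differentiable (by simp)).differentiableAt)]
  have key : ∀ k, christoffel (fun y => u y • g y) k i j x * (u x * W' x k)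
      = u x * (christoffel g k i j x * W' x k)
        + (1 / 2) * (pd u i x * ((if k = j then (1:ℝ) else 0) * W' x k))
        + (1 / 2) * (pd u j x * ((if k = i then (1:ℝ) else 0) * W' x k))
        - (1 / 2) * (g x i j * ((∑ l, (g x)⁻¹ k l * pd u l x) * W' x k)) := by
    intro k
    rw [christoffel_smul hg hu huc]
    have hcanc : u x / (2 * u x) = 1 / 2 := by
      rw [mul_comm, ← div_div, div_self (hu x).ne']
    linear_combination ((pd u i x * (if k = j then (1:ℝ) else 0)
      + pd u j x * (if k = i then (1:ℝ) else 0)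
      - g x i j * ∑ l, (g x)⁻¹ k l * pd u l x) * W' x k) * hcanc
  rw [Finset.sum_congr rfl (fun k _ => key k)]
  simp only [Finset.sum_sub_distrib, Finset.sum_add_distrib, ← Finset.mul_sum]
  have hd1 : ∑ k, (if k = j then (1:ℝ) else 0) * W' x k = W' x j := by simp
  have hd2 : ∑ k, (if k = i then (1:ℝ) else 0) * W' x k = W' x i := by simp
  rw [hd1, hd2]
  ring

lemma trace_smul (hW : IsSmoothOneForm W') (x : EuclideanSpace ℝ (Fin n)) :
    (∑ k, ∑ l, ((fun y => u y • g y) x)⁻¹ k l *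
        covDOne (fun y => u y • g y) (fun y m => u y * W' y m) k l x)
      = (∑ k, ∑ l, (g x)⁻¹ k l * covDOne g W' k l x)
        + (u x)⁻¹ * ((1 / 2) * (n : ℝ) *
            ∑ k, (∑ l, (g x)⁻¹ k l * pd u l x) * W' x k) := by
  have hinv1 : (u x)⁻¹ * u x = 1 := inv_mul_cancel₀ (hu x).ne'
  have key2 : ∀ k l, ((fun y => u y • g y) x)⁻¹ k l *
        covDOne (fun y => u y • g y) (fun y m => u y * W' y m) k l x
      = (g x)⁻¹ k l * covDOne g W' k l x
        + (u x)⁻¹ * ((1 / 2) * ((g x)⁻¹ k l * (pd u k x * W' x l)))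
        - (u x)⁻¹ * ((1 / 2) * ((g x)⁻¹ k l * (pd u l x * W' x k)))
        + (u x)⁻¹ * (((1 / 2) * ∑ m, (∑ r, (g x)⁻¹ m r * pd u r x) * W' x m)
            * ((g x)⁻¹ k l * g x k l)) := by
    intro k l
    show ((u x • g x))⁻¹ k l * _ = _
    rw [inv_smul_metric hg hu huc x, covDOne_smul hg hu huc hW k l x]
    simp only [Matrix.smul_apply, smul_eq_mul]
    linear_combination ((g x)⁻¹ k l * covDOne g W' k l x) * hinv1
  rw [Finset.sum_congr rfl (fun k _ => Finset.sum_congr rfl (fun l _ => key2 k l))]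
  simp only [Finset.sum_add_distrib, Finset.sum_sub_distrib, ← Finset.mul_sum]
  have hS : ∑ k, ∑ l, (g x)⁻¹ k l * (pd u k x * W' x l)
      = ∑ k, ∑ l, (g x)⁻¹ k l * (pd u l x * W' x k) := by
    rw [Finset.sum_comm]
    refine Finset.sum_congr rfl (fun k _ => Finset.sum_congr rfl (fun l _ => ?_))
    rw [ginv_symm hg hu huc x]
  have htr : ∑ k, ∑ l, (g x)⁻¹ k l * g x k l = (n : ℝ) := by
    have : ∀ k, ∑ l, (g x)⁻¹ k l * g x k l = 1 := by
      intro k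
      have h0 := ginv_mul_g hg hu huc x k k
      simp only [if_pos rfl, eq_self_iff_true, if_true] at h0
      rw [← h0]
      refine Finset.sum_congr rfl (fun l _ => ?_)
      rw [g_symm hg hu huc x k l]
    rw [Finset.sum_congr rfl (fun k _ => this k)]
    simp
  rw [hS, htr]
  ring

lemma confKilling_smul (hn : (n : ℝ) ≠ 0) (hW : IsSmoothOneForm W') (i j : Fin n)
    (x : EuclideanSpace ℝ (Fin n)) :
    confKilling (fun y => u y • g y) (fun y m => u y * W' y m) i j x
      = u x * confKilling g W' i j x := by
  have hinv1 : (u x)⁻¹ * u x = 1 := inv_mul_cancel₀ (hu x).ne'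
  unfold confKilling
  rw [covDOne_smul hg hu huc hW i j x, covDOne_smul hg hu huc hW j i x,
    trace_smul hg hu huc hW x]
  simp only [Matrix.smul_apply, smul_eq_mul]
  rw [g_symm hg hu huc x j i]
  field_simp [(hu x).ne']
  ring

end smulmetric

lemma inv_mul_rpow (P F : ℝ) (hP : 0 < P) (hF : 0 ≤ F) (p : ℝ) :
    (P⁻¹ * F) ^ p = P ^ (-p) * F ^ p := by
  rw [Real.mul_rpow (inv_nonneg.2 hP.le) hF, Real.inv_rpow hP.le, ← Real.rpow_neg hP.le]


/-- **Conformal covariance of the method-B system, for arbitrary constraint maps.**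
For arbitrary maps `ρ` (assigning a function to a pair (metric, 2-tensor)) and `J`
(assigning a one-form), define the system `S'_{g,τ,σ}(φ,W) = 0` by `ρ(ĝ,K̂) = 0` and
`J(ĝ,K̂) = 0` with `ĝ = φ^{N-2} g`, `K̂ = (τ/n) ĝ + φ^{-2}(σ + φ^N L̊_g W)`.
Then for every smooth positive `ψ`, with `g̃ = ψ^{N-2} g` and `σ̃ = ψ^{-2} σ`,
`(φ, W)` (with `φ > 0`) solves `S'_{g,τ,σ}` iff `(ψ^{-1} φ, ψ^{N-2} W)` solves
`S'_{g̃,τ,σ̃}`. -/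
theorem methodB_system_conformal_covariance
    (n : ℕ) (hn : 3 ≤ n) (N : ℝ) (hN : N = 2 * n / ((n : ℝ) - 2))
    (ρ : (EuclideanSpace ℝ (Fin n) → Matrix (Fin n) (Fin n) ℝ) →
      (EuclideanSpace ℝ (Fin n) → Matrix (Fin n) (Fin n) ℝ) →
      (EuclideanSpace ℝ (Fin n) → ℝ))
    (J : (EuclideanSpace ℝ (Fin n) → Matrix (Fin n) (Fin n) ℝ) →
      (EuclideanSpace ℝ (Fin n) → Matrix (Fin n) (Fin n) ℝ) →
      (EuclideanSpace ℝ (Fin n) → Fin n → ℝ))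
    (g : EuclideanSpace ℝ (Fin n) → Matrix (Fin n) (Fin n) ℝ)
    (hg : IsRiemannianMetric g)
    (τ : EuclideanSpace ℝ (Fin n) → ℝ) (hτ : ContDiff ℝ (⊤ : ℕ∞) τ)
    (σ : EuclideanSpace ℝ (Fin n) → Matrix (Fin n) (Fin n) ℝ)
    (hσ : IsSmoothSym2Tensor σ)
    (ψ : EuclideanSpace ℝ (Fin n) → ℝ) (hψpos : ∀ x, 0 < ψ x) (hψ : ContDiff ℝ (⊤ : ℕ∞) ψ)
    (φ : EuclideanSpace ℝ (Fin n) → ℝ) (hφpos : ∀ x, 0 < φ x) (hφ : ContDiff ℝ (⊤ : ℕ∞) φ)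
    (W : EuclideanSpace ℝ (Fin n) → Fin n → ℝ) (hW : IsSmoothOneForm W) :
    ((∀ x, ρ (hatg N g φ) (hatK N g σ τ φ W) x = 0)
        ∧ (∀ x i, J (hatg N g φ) (hatK N g σ τ φ W) x i = 0))
      ↔
    ((∀ x, ρ (hatg N (fun y => ψ y ^ (N - 2) • g y) (fun y => (ψ y)⁻¹ * φ y))
          (hatK N (fun y => ψ y ^ (N - 2) • g y) (fun y => ψ y ^ (-2 : ℝ) • σ y) τ
            (fun y => (ψ y)⁻¹ * φ y) (fun y k => ψ y ^ (N - 2) * W y k)) x = 0)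
        ∧ (∀ x i, J (hatg N (fun y => ψ y ^ (N - 2) • g y) (fun y => (ψ y)⁻¹ * φ y))
          (hatK N (fun y => ψ y ^ (N - 2) • g y) (fun y => ψ y ^ (-2 : ℝ) • σ y) τ
            (fun y => (ψ y)⁻¹ * φ y) (fun y k => ψ y ^ (N - 2) * W y k)) x i = 0)) := by
  have hupos : ∀ x, 0 < ψ x ^ (N - 2) := fun x => Real.rpow_pos_of_pos (hψpos x) _
  have huc : ContDiff ℝ (⊤ : ℕ∞) (fun y => ψ y ^ (N - 2)) := by
    rw [contDiff_iff_contDiffAt]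
    intro x
    exact (hψ.contDiffAt).rpow_const_of_ne (hψpos x).ne'
  have hn0 : (n : ℝ) ≠ 0 := by
    have : 0 < n := lt_of_lt_of_le (by norm_num) hn
    exact Nat.cast_ne_zero.mpr this.ne'
  have hCK : ∀ (i j : Fin n) x,
      confKilling (fun y => ψ y ^ (N - 2) • g y) (fun y k => ψ y ^ (N - 2) * W y k) i j x
        = ψ x ^ (N - 2) * confKilling g W i j x :=
    fun i j x => confKilling_smul hg hupos huc hn0 hW i j x
  have hgeq : hatg N (fun y => ψ y ^ (N - 2) • g y) (fun y => (ψ y)⁻¹ * φ y) = hatg N g φ := by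
    funext x
    unfold hatg
    rw [smul_smul]
    congr 1
    rw [inv_mul_rpow _ _ (hψpos x) (hφpos x).le]
    have hk1 : ψ x ^ (-(N - 2)) * ψ x ^ (N - 2) = 1 := by
      rw [← Real.rpow_add (hψpos x)]
      norm_num
    linear_combination (φ x ^ (N - 2)) * hk1
  have hKeq : hatK N (fun y => ψ y ^ (N - 2) • g y) (fun y => ψ y ^ (-2 : ℝ) • σ y) τ
      (fun y => (ψ y)⁻¹ * φ y) (fun y k => ψ y ^ (N - 2) * W y k) = hatK N g σ τ φ W := by
    funext x
    unfold hatK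
    ext i j
    simp only [Matrix.of_apply, Matrix.smul_apply, smul_eq_mul]
    rw [hCK i j x]
    simp only [inv_mul_rpow (ψ x) (φ x) (hψpos x) (hφpos x).le]
    have hk1 : ψ x ^ (-(N - 2)) * ψ x ^ (N - 2) = 1 := by
      rw [← Real.rpow_add (hψpos x)]; norm_num
    have hk2 : ψ x ^ (-(-2 : ℝ)) * ψ x ^ (-2 : ℝ) = 1 := by
      rw [← Real.rpow_add (hψpos x)]; norm_num
    have hk3 : ψ x ^ (-(-2 : ℝ)) * (ψ x ^ (-N) * ψ x ^ (N - 2)) = 1 := by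
      rw [← Real.rpow_add (hψpos x), ← Real.rpow_add (hψpos x),
        show -(-2 : ℝ) + (-N + (N - 2)) = 0 by ring, Real.rpow_zero]
    linear_combination (τ x / (n : ℝ) * g x i j * φ x ^ (N - 2)) * hk1
      + (φ x ^ (-2 : ℝ) * σ x i j) * hk2
      + (φ x ^ (-2 : ℝ) * φ x ^ N * confKilling g W i j x) * hk3
  rw [hgeq, hKeq]
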